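/- Let l, m > 1 be integers and let Γ = K_l[mK₂] be the lexicographic product of the complete graph K_l with the disjoint union of m edges, i.e., the graph with vertex set {0,…,l−1} × {0,…,m−1} × {0,1} in which distinct vertices (i,a,x) and (j,b,y) are adjacent if and only if i ≠ j, or (i = j, a = b and x ≠ y). Then Γ is a Deza graph with parameters (2lm, 2lm−2m+1, 2lm−2m, 2lm−4m+2). -/

import Mathlib

/-- The lexicographic product `K_l[mK₂]`: distinct `(i,a,x)` and `(j,b,y)` are adjacent
iff `i ≠ j`, or `i = j`, `a = b` and `x ≠ y`. -/
def gammaThirteen (l m : ℕ) : SimpleGraph (Fin l × Fin m × Fin 2) where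
  Adj v u := v.1 ≠ u.1 ∨ (v.1 = u.1 ∧ v.2.1 = u.2.1 ∧ v.2.2 ≠ u.2.2)
  symm := by
    constructor
    rintro v u (h | ⟨h1, h2, h3⟩)
    · exact Or.inl h.symm
    · exact Or.inr ⟨h1.symm, h2.symm, h3.symm⟩
  loopless := by
    constructor
    rintro v (h | ⟨-, -, h⟩) <;> exact h rfl

/-- `Γ` is a Deza graph with parameters `(n, k, b, a)`: it has `n` vertices, is
`k`-regular, and any pair of distinct vertices has either `a` or `b` common neighbors. -/
def IsDezaGraph {V : Type} (Γ : SimpleGraph V) (n k b a : ℕ) : Prop :=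
  Nat.card V = n ∧ (∀ v, (Γ.neighborSet v).ncard = k) ∧
    ∀ u v : V, u ≠ v →
      (Γ.commonNeighbors u v).ncard = a ∨ (Γ.commonNeighbors u v).ncard = b

/-!
`Γ` is the lexicographic product `K_l[H]` with `H = mK₂ = ⊥ □ K₂`. In a lexicographic product
`G[H]` the neighbourhood of `(i, p)` is `N_G(i) × V(H) ⊔ {i} × N_H(p)`. Hence two vertices in a
common fibre have `(l - 1)·2m + |N_H(p) ∩ N_H(q)| = (l - 1)·2m` common neighbours, while two
vertices in different fibres have `(l - 2)·2m + |N_H(p)| + |N_H(q)| = (l - 2)·2m + 2`.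
-/

namespace SimpleGraph

variable {V W : Type*}

def lexProd (G : SimpleGraph V) (H : SimpleGraph W) : SimpleGraph (V × W) where
  Adj x y := G.Adj x.1 y.1 ∨ (x.1 = y.1 ∧ H.Adj x.2 y.2)
  symm := ⟨fun _ _ ↦ Or.imp (G.adj_symm ·) fun h ↦ ⟨h.1.symm, h.2.symm⟩⟩
  loopless := ⟨fun _ h ↦ h.elim (G.loopless.irrefl _) fun h ↦ H.loopless.irrefl _ h.2⟩

variable {G : SimpleGraph V} {H : SimpleGraph W}

@[simp]
theorem lexProd_adj {x y : V × W} :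
    (G.lexProd H).Adj x y ↔ G.Adj x.1 y.1 ∨ (x.1 = y.1 ∧ H.Adj x.2 y.2) :=
  Iff.rfl

theorem neighborSet_lexProd (x : V × W) :
    (G.lexProd H).neighborSet x =
      G.neighborSet x.1 ×ˢ Set.univ ∪ {x.1} ×ˢ H.neighborSet x.2 := by
  ext ⟨i, p⟩
  simp [eq_comm]

theorem commonNeighbors_lexProd_of_fst_eq (i : V) (p q : W) :
    (G.lexProd H).commonNeighbors (i, p) (i, q) =
      G.neighborSet i ×ˢ Set.univ ∪ {i} ×ˢ H.commonNeighbors p q := by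
  ext ⟨j, r⟩
  simp only [commonNeighbors, Set.mem_inter_iff, mem_neighborSet, lexProd_adj, Set.mem_union,
    Set.mem_prod, Set.mem_univ, and_true, Set.mem_singleton_iff, eq_comm]
  grind

theorem commonNeighbors_lexProd_of_adj {i j : V} (hij : G.Adj i j) (p q : W) :
    (G.lexProd H).commonNeighbors (i, p) (j, q) =
      G.commonNeighbors i j ×ˢ Set.univ ∪ ({i} ×ˢ H.neighborSet p ∪ {j} ×ˢ H.neighborSet q) := by
  ext ⟨k, r⟩
  have hji := hij.symm
  simp only [commonNeighbors, Set.mem_inter_iff, mem_neighborSet, lexProd_adj, Set.mem_union,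
    Set.mem_prod, Set.mem_univ, and_true, Set.mem_singleton_iff, eq_comm]
  grind

theorem ncard_neighborSet_lexProd [Finite V] [Finite W] (x : V × W) :
    ((G.lexProd H).neighborSet x).ncard =
      (G.neighborSet x.1).ncard * Nat.card W + (H.neighborSet x.2).ncard := by
  rw [neighborSet_lexProd, Set.ncard_union_eq, Set.ncard_prod, Set.ncard_prod, Set.ncard_univ,
    Set.ncard_singleton, one_mul]
  exact Set.disjoint_prod.2 <| .inl <| Set.disjoint_singleton_right.2 G.notMem_neighborSet_self

theorem ncard_commonNeighbors_lexProd_of_fst_eq [Finite V] [Finite W] (i : V) (p q : W) :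
    ((G.lexProd H).commonNeighbors (i, p) (i, q)).ncard =
      (G.neighborSet i).ncard * Nat.card W + (H.commonNeighbors p q).ncard := by
  rw [commonNeighbors_lexProd_of_fst_eq, Set.ncard_union_eq, Set.ncard_prod, Set.ncard_prod,
    Set.ncard_univ, Set.ncard_singleton, one_mul]
  exact Set.disjoint_prod.2 <| .inl <| Set.disjoint_singleton_right.2 G.notMem_neighborSet_self

theorem ncard_commonNeighbors_lexProd_of_adj [Finite V] [Finite W] {i j : V} (hij : G.Adj i j)
    (p q : W) :
    ((G.lexProd H).commonNeighbors (i, p) (j, q)).ncard =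
      (G.commonNeighbors i j).ncard * Nat.card W + (H.neighborSet p).ncard +
        (H.neighborSet q).ncard := by
  have hfibres : Disjoint ({i} ×ˢ H.neighborSet p) ({j} ×ˢ H.neighborSet q) :=
    Set.disjoint_prod.2 <| .inl <| Set.disjoint_singleton.2 hij.ne
  have hcommon : Disjoint (G.commonNeighbors i j ×ˢ Set.univ)
      ({i} ×ˢ H.neighborSet p ∪ {j} ×ˢ H.neighborSet q) :=
    Set.disjoint_union_right.2
      ⟨Set.disjoint_prod.2 <| .inl <| Set.disjoint_singleton_right.2 <|
          G.notMem_commonNeighbors_left i j,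
        Set.disjoint_prod.2 <| .inl <| Set.disjoint_singleton_right.2 <|
          G.notMem_commonNeighbors_right i j⟩
  rw [commonNeighbors_lexProd_of_adj hij, Set.ncard_union_eq hcommon, Set.ncard_union_eq hfibres,
    add_assoc]
  simp only [Set.ncard_prod, Set.ncard_univ, Set.ncard_singleton, one_mul]

theorem ncard_neighborSet_top [Finite V] (v : V) :
    ((⊤ : SimpleGraph V).neighborSet v).ncard = Nat.card V - 1 := by
  rw [neighborSet_top, Set.ncard_compl, Set.ncard_singleton]

theorem ncard_commonNeighbors_top [Finite V] {v w : V} (h : v ≠ w) :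
    ((⊤ : SimpleGraph V).commonNeighbors v w).ncard = Nat.card V - 2 := by
  rw [commonNeighbors_top_eq, Set.ncard_sdiff (Set.subset_univ _), Set.ncard_univ, Set.ncard_pair h]

theorem neighborSet_bot_boxProd (x : V × W) :
    ((⊥ : SimpleGraph V) □ H).neighborSet x = {x.1} ×ˢ H.neighborSet x.2 := by
  rw [neighborSet_boxProd, neighborSet_bot, Set.empty_prod, Set.empty_union]

theorem commonNeighbors_bot_boxProd_top_fin_two {x y : V × Fin 2} (h : x ≠ y) :
    ((⊥ : SimpleGraph V) □ (⊤ : SimpleGraph (Fin 2))).commonNeighbors x y = ∅ := by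
  obtain ⟨a, s⟩ := x
  obtain ⟨b, t⟩ := y
  ext ⟨c, u⟩
  simp only [commonNeighbors, Set.mem_inter_iff, mem_neighborSet, boxProd_adj, bot_adj, false_and,
    top_adj, ne_eq, false_or, Set.mem_empty_iff_false, iff_false, not_and, and_imp]
  rintro hsu rfl htu rfl
  exact h (Prod.ext rfl (show s = t by omega))

end SimpleGraph

open SimpleGraph

theorem gammaThirteen_eq_lexProd (l m : ℕ) :
    gammaThirteen l m =
      (⊤ : SimpleGraph (Fin l)).lexProd
        ((⊥ : SimpleGraph (Fin m)) □ (⊤ : SimpleGraph (Fin 2))) := by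
  ext x y
  simp only [gammaThirteen, ne_eq, lexProd_adj, top_adj, boxProd_adj, bot_adj, false_and, false_or]
  tauto

theorem stmt13_general (l m : ℕ) :
    IsDezaGraph (gammaThirteen l m) (2 * l * m)
      (2 * l * m - 2 * m + 1) (2 * l * m - 2 * m) (2 * l * m - 4 * m + 2) := by
  have hW : Nat.card (Fin m × Fin 2) = 2 * m := by simp [mul_comm]
  have hmate (p : Fin m × Fin 2) :
      (((⊥ : SimpleGraph (Fin m)) □ (⊤ : SimpleGraph (Fin 2))).neighborSet p).ncard = 1 := by
    rw [neighborSet_bot_boxProd, Set.ncard_prod, Set.ncard_singleton, ncard_neighborSet_top,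
      Nat.card_fin, one_mul]
  rw [gammaThirteen_eq_lexProd]
  refine ⟨by rw [Nat.card_prod, hW, Nat.card_fin]; ring, fun x ↦ ?_, fun ⟨i, p⟩ ⟨j, q⟩ hne ↦ ?_⟩
  · rw [ncard_neighborSet_lexProd, ncard_neighborSet_top, hmate, hW, Nat.card_fin, Nat.sub_mul]
    ring_nf
  obtain rfl | hij := eq_or_ne i j
  · right
    rw [ncard_commonNeighbors_lexProd_of_fst_eq, ncard_neighborSet_top,
      commonNeighbors_bot_boxProd_top_fin_two (by simpa using hne), Set.ncard_empty, hW,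
      Nat.card_fin, Nat.sub_mul]
    ring_nf
  · left
    rw [ncard_commonNeighbors_lexProd_of_adj hij, ncard_commonNeighbors_top hij, hmate, hmate, hW,
      Nat.card_fin, Nat.sub_mul]
    ring_nf

theorem stmt13 (l m : ℕ) (hl : 1 < l) (hm : 1 < m) :
    IsDezaGraph (gammaThirteen l m) (2 * l * m)
      (2 * l * m - 2 * m + 1) (2 * l * m - 2 * m) (2 * l * m - 4 * m + 2) :=
  stmt13_general l m
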